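/- arXiv:1503.01130 — 3 statements merged into one kernel-verified Lean document; each statement's English description precedes it below -/
import Mathlib

section
/- Let φ be a holomorphic self-map of the unit disc 𝔻 such that sup_{z∈𝔻} |φ(z)| < 1 and φ is a multiplier of 𝒟. Then for every u ∈ 𝒟 the weighted composition operator W_{u,φ} : f ↦ u·(f∘φ) is bounded on the Dirichlet space 𝒟. -/
open Complex MeasureTheory Metric Set Filter

noncomputable section

/-- The open unit disc in the complex plane. -/
def unitDisc : Set ℂ := Metric.ball 0 1

/-- The square of the Dirichlet norm:
`‖f‖²_𝒟 = |f(0)|² + ∫_𝔻 |f′(z)|² dA(z)`, with `A` normalized area measure. -/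
def dirNormSq (f : ℂ → ℂ) : ℝ :=
  ‖f 0‖ ^ 2 + (1 / Real.pi) * ∫ z in unitDisc, ‖deriv f z‖ ^ 2

/-- Membership in the Dirichlet space `𝒟`: `f` is holomorphic on `𝔻` and
`|f′|²` is integrable over `𝔻`. -/
def MemDirichlet (f : ℂ → ℂ) : Prop :=
  DifferentiableOn ℂ f unitDisc ∧
    IntegrableOn (fun z : ℂ => ‖deriv f z‖ ^ 2) unitDisc

/-- The weighted composition operator `W_{u,φ} : f ↦ u·(f∘φ)` is bounded
on the Dirichlet space: there is a constant `C` with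
`‖u·(f∘φ)‖²_𝒟 ≤ C ‖f‖²_𝒟` (and `u·(f∘φ) ∈ 𝒟`) for all `f ∈ 𝒟`. -/
def WCOBounded (u φ : ℂ → ℂ) : Prop :=
  ∃ C : ℝ, 0 ≤ C ∧ ∀ f : ℂ → ℂ, MemDirichlet f →
    MemDirichlet (fun z => u z * f (φ z)) ∧
      dirNormSq (fun z => u z * f (φ z)) ≤ C * dirNormSq f

/-!
Since `φ(𝔻)` lies in a disc `|z| ≤ r < 1`, point evaluations of `f` and `f'` there are bounded
by `‖f‖_𝒟`: the Cauchy formula on the circles `|z| = ρ`, integrated over an annulus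
`r < ρ < 1`, bounds `|g(w)|` by `∫_𝔻 |g|` for holomorphic `g`; taking `g = (f')²` controls `f'`,
and then the mean value theorem controls `f`. Consequently
`|(u·f∘φ)'|² ≤ 2 (|u'|² |f∘φ|² + |u φ'|² |f'∘φ|²) ≲ ‖f‖²_𝒟 (|u'|² + |u φ'|²)`,
and `u φ' = (φu)' - φ u'` is square integrable because `φ` is a bounded multiplier.
-/

open Real

theorem norm_circleAverage_le {E : Type*} [NormedAddCommGroup E] [NormedSpace ℝ E]
    (f : ℂ → E) (c : ℂ) (R : ℝ) :
    ‖circleAverage f c R‖ ≤ circleAverage (fun z ↦ ‖f z‖) c R := by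
  rw [circleAverage, circleAverage, norm_smul, smul_eq_mul, Real.norm_of_nonneg (by positivity)]
  gcongr
  exact intervalIntegral.norm_integral_le_integral_norm two_pi_pos.le

theorem mul_norm_le_mul_circleAverage_norm {h : ℂ → ℂ} {w : ℂ} {ρ : ℝ}
    (hh : DiffContOnCl ℂ h (ball 0 ρ)) (hw : ‖w‖ < ρ) :
    (ρ - ‖w‖) * ‖h w‖ ≤ ρ * circleAverage (fun z ↦ ‖h z‖) 0 ρ := by
  have hρ : 0 < ρ := (norm_nonneg w).trans_lt hw
  have hwρ : 0 < ρ - ‖w‖ := sub_pos.2 hw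
  have hcont : ContinuousOn h (sphere 0 ρ) :=
    hh.continuousOn.mono (by rw [closure_ball 0 hρ.ne']; exact sphere_subset_closedBall)
  have hmvp : circleAverage (fun z ↦ (z / (z - w)) • h z) 0 ρ = h w := by
    rw [← abs_of_pos hρ] at hh hw
    simpa using hh.circleAverage_smul_div (mem_ball_zero_iff.2 hw)
  rw [← le_div_iff₀' hwρ, mul_div_right_comm, ← hmvp, ← smul_eq_mul, ← circleAverage_smul]
  refine (norm_circleAverage_le _ _ _).trans (circleAverage_mono ?_ ?_ fun z hz ↦ ?_)
  · refine (((continuousOn_id.div (continuousOn_id.sub continuousOn_const) fun z hz ↦ ?_).smul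
      hcont).norm).circleIntegrable hρ.le
    rw [mem_sphere_zero_iff_norm] at hz
    exact sub_ne_zero.2 (by rintro rfl; exact hw.ne hz)
  · exact (continuousOn_const.smul hcont.norm).circleIntegrable hρ.le
  · rw [abs_of_pos hρ, mem_sphere_zero_iff_norm] at hz
    have hzw : ρ - ‖w‖ ≤ ‖z - w‖ := by simpa [hz] using norm_sub_norm_le z w
    simp only [Pi.smul_apply, smul_eq_mul]
    rw [norm_mul, norm_div, hz]
    gcongr

theorem polarCoord_symm_eq_circleMap (p : ℝ × ℝ) :
    Complex.polarCoord.symm p = circleMap 0 p.1 p.2 := by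
  simp [circleMap, Complex.exp_mul_I]

theorem integral_Ioo_neg_pi_pi_eq_circleAverage {E : Type*} [NormedAddCommGroup E]
    [NormedSpace ℝ E] (F : ℂ → E) (ρ : ℝ) :
    ∫ θ in Ioo (-π) π, F (circleMap 0 ρ θ) = (2 * π) • circleAverage F 0 ρ := by
  rw [circleAverage_eq_integral_add (-π), smul_inv_smul₀ two_pi_pos.ne',
    intervalIntegral.integral_comp_add_right (fun θ ↦ F (circleMap 0 ρ θ)), zero_add,
    show 2 * π + -π = π by ring, intervalIntegral.integral_of_le (by linarith [pi_pos]),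
    integral_Ioc_eq_integral_Ioo]

theorem integral_annulus_eq {E : Type*} [NormedAddCommGroup E] [NormedSpace ℝ E]
    {F : ℂ → E} {a b : ℝ} (ha : 0 ≤ a) (hF : ContinuousOn F (closedBall 0 b)) :
    ∫ z in norm ⁻¹' Ioo a b, F z = ∫ ρ in Ioo a b, (2 * π * ρ) • circleAverage F 0 ρ := by
  set A : Set ℂ := norm ⁻¹' Ioo a b
  have hA : MeasurableSet A := measurableSet_Ioo.preimage continuous_norm.measurable
  have hsupp : ∀ p ∈ polarCoord.target, p.1 • A.indicator F (Complex.polarCoord.symm p) =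
      (Ioo a b ×ˢ univ).indicator (fun p : ℝ × ℝ ↦ p.1 • F (circleMap 0 p.1 p.2)) p := by
    intro p hp
    have hp1 : ‖Complex.polarCoord.symm p‖ = p.1 := by
      rw [Complex.norm_polarCoord_symm, abs_of_pos hp.1]
    by_cases hpA : p.1 ∈ Ioo a b
    · rw [indicator_of_mem (by rwa [mem_preimage, hp1]), indicator_of_mem (by simpa using hpA),
        polarCoord_symm_eq_circleMap]
    · rw [indicator_of_notMem (by rwa [mem_preimage, hp1]),
        indicator_of_notMem (by simpa using hpA), smul_zero]
  have htarget : polarCoord.target ∩ Ioo a b ×ˢ univ = Ioo a b ×ˢ Ioo (-π) π := by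
    rw [polarCoord_target, prod_inter_prod, inter_univ,
      inter_eq_right.2 (Ioo_subset_Ioi_self.trans (Ioi_subset_Ioi ha))]
  have hint : IntegrableOn (fun p : ℝ × ℝ ↦ p.1 • F (circleMap 0 p.1 p.2))
      (Ioo a b ×ˢ Ioo (-π) π) := by
    refine ContinuousOn.integrableOn_compact (isCompact_Icc.prod isCompact_Icc) ?_
      |>.mono_set (prod_mono Ioo_subset_Icc_self Ioo_subset_Icc_self)
    refine continuousOn_fst.smul (hF.comp (by fun_prop) fun p hp ↦ ?_)
    rw [mem_closedBall_zero_iff, norm_circleMap_zero, abs_of_nonneg (ha.trans hp.1.1)]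
    exact hp.1.2
  rw [← integral_indicator hA, ← Complex.integral_comp_polarCoord_symm,
    setIntegral_congr_fun polarCoord.open_target.measurableSet hsupp,
    setIntegral_indicator (measurableSet_Ioo.prod MeasurableSet.univ), htarget,
    Measure.volume_eq_prod, setIntegral_prod _ hint]
  refine setIntegral_congr_fun measurableSet_Ioo fun ρ _ ↦ ?_
  rw [integral_smul, integral_Ioo_neg_pi_pi_eq_circleAverage, smul_smul, mul_comm]

theorem mul_norm_le_integral_annulus {h : ℂ → ℂ} {w : ℂ} {a b : ℝ} (hwa : ‖w‖ < a)
    (hab : a ≤ b) (hh : DifferentiableOn ℂ h (closedBall 0 b)) :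
    2 * π * (a - ‖w‖) * ‖h w‖ * (b - a) ≤ ∫ z in norm ⁻¹' Ioo a b, ‖h z‖ := by
  have ha : 0 < a := (norm_nonneg w).trans_lt hwa
  have hcont : ContinuousOn (fun z ↦ ‖h z‖) (closedBall 0 b) := hh.continuousOn.norm
  rw [integral_annulus_eq ha.le hcont, ← volume_real_Ioo_of_le hab]
  refine setIntegral_ge_of_const_le_real measurableSet_Ioo (by simp) (fun ρ hρ ↦ ?_) ?_
  · have hdiff : DiffContOnCl ℂ h (ball 0 ρ) :=
      (hh.mono (closedBall_subset_closedBall hρ.2.le)).diffContOnCl_ball le_rfl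
    calc 2 * π * (a - ‖w‖) * ‖h w‖ ≤ 2 * π * ((ρ - ‖w‖) * ‖h w‖) := by
          rw [mul_assoc]; gcongr; exact hρ.1.le
      _ ≤ 2 * π * (ρ * circleAverage (fun z ↦ ‖h z‖) 0 ρ) := by
          have := mul_norm_le_mul_circleAverage_norm hdiff (hwa.trans hρ.1)
          gcongr
      _ = (2 * π * ρ) • circleAverage (fun z ↦ ‖h z‖) 0 ρ := by rw [smul_eq_mul]; ring
  · refine ContinuousOn.integrableOn_compact isCompact_Icc ?_ |>.mono_set Ioo_subset_Icc_self
    refine (continuousOn_const.mul continuousOn_id).smul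
      ((hcont.mono fun z hz ↦ ?_).circleAverage fun ρ hρ ↦ ha.le.trans hρ.1)
    simpa using hz.2

theorem norm_le_integral_unitDisc {h : ℂ → ℂ} {r : ℝ} {w : ℂ}
    (hh : DifferentiableOn ℂ h unitDisc) (hint : IntegrableOn (fun z ↦ ‖h z‖) unitDisc)
    (hr : r < 1) (hw : ‖w‖ ≤ r) :
    ‖h w‖ ≤ 9 / (2 * π * (1 - r) ^ 2) * ∫ z in unitDisc, ‖h z‖ := by
  -- the annulus `(2r+1)/3 < |z| < (r+2)/3` has width `(1-r)/3` and lies `(1-r)/3` beyond `w`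
  have hb : closedBall (0 : ℂ) ((r + 2) / 3) ⊆ unitDisc := closedBall_subset_ball (by linarith)
  have hannulus := mul_norm_le_integral_annulus (w := w) (a := (2 * r + 1) / 3) (b := (r + 2) / 3)
    (by linarith) (by linarith) (hh.mono hb)
  have hsub : ∫ z in norm ⁻¹' Ioo ((2 * r + 1) / 3) ((r + 2) / 3), ‖h z‖ ≤
      ∫ z in unitDisc, ‖h z‖ :=
    setIntegral_mono_set hint (Eventually.of_forall fun _ ↦ norm_nonneg _)
      (Eventually.of_forall fun z hz ↦ hb (mem_closedBall_zero_iff.2 hz.2.le))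
  have hkey : 2 * π * (1 - r) ^ 2 * ‖h w‖ ≤ 9 * ∫ z in unitDisc, ‖h z‖ := by
    have : 2 * π * ((1 - r) / 3) * ‖h w‖ ≤ 2 * π * ((2 * r + 1) / 3 - ‖w‖) * ‖h w‖ := by
      gcongr; linarith
    nlinarith [pi_pos]
  rw [div_mul_eq_mul_div, le_div_iff₀ (mul_pos two_pi_pos (pow_pos (sub_pos.2 hr) 2))]
  linarith

theorem norm_add_sq_le_two_mul {E : Type*} [SeminormedAddCommGroup E] (x y : E) :
    ‖x + y‖ ^ 2 ≤ 2 * (‖x‖ ^ 2 + ‖y‖ ^ 2) :=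
  (pow_le_pow_left₀ (norm_nonneg _) (norm_add_le x y) 2).trans add_sq_le

theorem sq_norm_apply_zero_le_dirNormSq (f : ℂ → ℂ) : ‖f 0‖ ^ 2 ≤ dirNormSq f :=
  le_add_of_nonneg_right <| mul_nonneg (by positivity) <|
    setIntegral_nonneg measurableSet_ball fun _ _ ↦ by positivity

theorem integral_sq_norm_deriv_le_pi_mul_dirNormSq (f : ℂ → ℂ) :
    ∫ z in unitDisc, ‖deriv f z‖ ^ 2 ≤ π * dirNormSq f := by
  rw [dirNormSq, mul_add, ← mul_assoc, mul_one_div_cancel pi_ne_zero, one_mul]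
  exact le_add_of_nonneg_left (by positivity)

theorem MemDirichlet.sq_norm_deriv_le {f : ℂ → ℂ} (hf : MemDirichlet f) {r : ℝ} (hr : r < 1)
    {w : ℂ} (hw : ‖w‖ ≤ r) : ‖deriv f w‖ ^ 2 ≤ 9 / (2 * (1 - r) ^ 2) * dirNormSq f := by
  -- `(f')²` is holomorphic, so the L¹ point estimate for it is an L² estimate for `f'`
  have hbergman := norm_le_integral_unitDisc (h := fun z ↦ deriv f z ^ 2)
    ((hf.1.deriv isOpen_ball).pow 2) (by simpa only [norm_pow] using hf.2) hr hw
  simp only [norm_pow] at hbergman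
  calc ‖deriv f w‖ ^ 2 ≤ 9 / (2 * π * (1 - r) ^ 2) * (π * dirNormSq f) :=
        hbergman.trans (by gcongr; exact integral_sq_norm_deriv_le_pi_mul_dirNormSq f)
    _ = 9 / (2 * (1 - r) ^ 2) * dirNormSq f := by field_simp

theorem MemDirichlet.sq_norm_le {f : ℂ → ℂ} (hf : MemDirichlet f) {r : ℝ} (hr : r < 1)
    {w : ℂ} (hw : ‖w‖ ≤ r) : ‖f w‖ ^ 2 ≤ (2 + 9 / (1 - r) ^ 2) * dirNormSq f := by
  have hN : 0 ≤ dirNormSq f := (sq_nonneg _).trans (sq_norm_apply_zero_le_dirNormSq f)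
  set C := √(9 / (2 * (1 - r) ^ 2) * dirNormSq f)
  have hderiv : ∀ ζ ∈ closedBall (0 : ℂ) r, ‖deriv f ζ‖ ≤ C := fun ζ hζ ↦
    Real.le_sqrt_of_sq_le (hf.sq_norm_deriv_le hr (mem_closedBall_zero_iff.1 hζ))
  have hmvt := (convex_closedBall (0 : ℂ) r).norm_image_sub_le_of_norm_deriv_le
    (fun ζ hζ ↦ hf.1.differentiableAt (isOpen_ball.mem_nhds
      (closedBall_subset_ball hr hζ))) hderiv
    (mem_closedBall_self ((norm_nonneg w).trans hw)) (mem_closedBall_zero_iff.2 hw)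
  have hfw : ‖f w‖ ≤ ‖f 0‖ + C := by
    calc ‖f w‖ ≤ ‖f 0‖ + ‖f w - f 0‖ := norm_le_norm_add_norm_sub' (f w) (f 0)
      _ ≤ ‖f 0‖ + C * ‖w‖ := by simpa using hmvt
      _ ≤ ‖f 0‖ + C := by gcongr; exact mul_le_of_le_one_right (Real.sqrt_nonneg _) (by linarith)
  calc ‖f w‖ ^ 2 ≤ 2 * (‖f 0‖ ^ 2 + C ^ 2) :=
        (pow_le_pow_left₀ (norm_nonneg _) hfw 2).trans add_sq_le
    _ ≤ 2 * (dirNormSq f + 9 / (2 * (1 - r) ^ 2) * dirNormSq f) := by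
        rw [Real.sq_sqrt (by positivity)]
        gcongr
        exact sq_norm_apply_zero_le_dirNormSq f
    _ = (2 + 9 / (1 - r) ^ 2) * dirNormSq f := by
        have : 1 - r ≠ 0 := by linarith
        field_simp

theorem sq_norm_deriv_mul_comp_le {u φ f : ℂ → ℂ} {z : ℂ} (hu : DifferentiableAt ℂ u z)
    (hφ : DifferentiableAt ℂ φ z) (hf : DifferentiableAt ℂ f (φ z)) :
    ‖deriv (fun z ↦ u z * f (φ z)) z‖ ^ 2 ≤
      2 * (‖deriv u z‖ ^ 2 * ‖f (φ z)‖ ^ 2 + ‖u z * deriv φ z‖ ^ 2 * ‖deriv f (φ z)‖ ^ 2) := by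
  have hchain : deriv (fun z ↦ f (φ z)) z = deriv f (φ z) * deriv φ z := deriv_comp z hf hφ
  rw [deriv_fun_mul (d := fun z ↦ f (φ z)) hu (hf.comp z hφ), hchain]
  refine (norm_add_sq_le_two_mul _ _).trans_eq ?_
  simp only [norm_mul, mul_pow]
  ring

theorem integrableOn_sq_norm_mul_deriv {u φ : ℂ → ℂ} (hu : MemDirichlet u)
    (hφu : MemDirichlet fun z ↦ φ z * u z) (hφ : DifferentiableOn ℂ φ unitDisc)
    (hφ1 : ∀ z ∈ unitDisc, ‖φ z‖ ≤ 1) :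
    IntegrableOn (fun z ↦ ‖u z * deriv φ z‖ ^ 2) unitDisc := by
  refine ((hφu.2.add hu.2).const_mul 2).mono'
    ((hu.1.continuousOn.mul (hφ.deriv isOpen_ball).continuousOn).norm.pow 2
      |>.aestronglyMeasurable measurableSet_ball)
    (ae_restrict_of_forall_mem measurableSet_ball fun z hz ↦ ?_)
  have hz' := isOpen_ball.mem_nhds hz
  have hprod : u z * deriv φ z = deriv (fun z ↦ φ z * u z) z + (-φ z * deriv u z) := by
    rw [deriv_fun_mul (hφ.differentiableAt hz') (hu.1.differentiableAt hz')]
    ring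
  rw [Real.norm_of_nonneg (by positivity), hprod]
  refine (norm_add_sq_le_two_mul _ _).trans ?_
  rw [norm_mul, norm_neg, mul_pow, Pi.add_apply]
  gcongr
  exact mul_le_of_le_one_left (sq_nonneg _) (pow_le_one₀ (norm_nonneg _) (hφ1 z hz))

theorem MemDirichlet.of_sq_norm_deriv_le {g : ℂ → ℂ} {G : ℂ → ℝ}
    (hg : DifferentiableOn ℂ g unitDisc) (hG : IntegrableOn G unitDisc)
    (hle : ∀ z ∈ unitDisc, ‖deriv g z‖ ^ 2 ≤ G z) : MemDirichlet g := by
  refine ⟨hg, hG.mono' ((hg.deriv isOpen_ball).continuousOn.norm.pow 2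
    |>.aestronglyMeasurable measurableSet_ball)
    (ae_restrict_of_forall_mem measurableSet_ball fun z hz ↦ ?_)⟩
  rw [Real.norm_of_nonneg (by positivity)]
  exact hle z hz

theorem dirNormSq_le_of_sq_norm_deriv_le {g : ℂ → ℂ} {G : ℂ → ℝ} {A : ℝ}
    (h0 : ‖g 0‖ ^ 2 ≤ A) (hG : IntegrableOn G unitDisc)
    (hle : ∀ z ∈ unitDisc, ‖deriv g z‖ ^ 2 ≤ G z) :
    dirNormSq g ≤ A + 1 / π * ∫ z in unitDisc, G z := by
  have hint := integral_mono_of_nonneg (Eventually.of_forall fun _ ↦ by positivity) hG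
    (ae_restrict_of_forall_mem measurableSet_ball hle)
  exact add_le_add h0 (mul_le_mul_of_nonneg_left hint (by positivity))

theorem MemDirichlet.sq_norm_deriv_mul_comp_le_dirNormSq {u φ f : ℂ → ℂ}
    (hu : DifferentiableOn ℂ u unitDisc) (hφ : DifferentiableOn ℂ φ unitDisc) (hf : MemDirichlet f)
    {r : ℝ} (hr : r < 1) (hφr : ∀ z ∈ unitDisc, ‖φ z‖ ≤ r) {z : ℂ} (hz : z ∈ unitDisc) :
    ‖deriv (fun z ↦ u z * f (φ z)) z‖ ^ 2 ≤ dirNormSq f *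
      (2 * (‖deriv u z‖ ^ 2 * (2 + 9 / (1 - r) ^ 2) +
        ‖u z * deriv φ z‖ ^ 2 * (9 / (2 * (1 - r) ^ 2)))) := by
  have hφz : φ z ∈ unitDisc := mem_ball_zero_iff.2 ((hφr z hz).trans_lt hr)
  have hz' := isOpen_ball.mem_nhds hz
  refine (sq_norm_deriv_mul_comp_le (hu.differentiableAt hz') (hφ.differentiableAt hz')
    (hf.1.differentiableAt (isOpen_ball.mem_nhds hφz))).trans ?_
  have hval := hf.sq_norm_le hr (hφr z hz)
  have hder := hf.sq_norm_deriv_le hr (hφr z hz)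
  calc _ ≤ 2 * (‖deriv u z‖ ^ 2 * ((2 + 9 / (1 - r) ^ 2) * dirNormSq f) +
        ‖u z * deriv φ z‖ ^ 2 * (9 / (2 * (1 - r) ^ 2) * dirNormSq f)) := by gcongr
    _ = _ := by ring

theorem wco_bounded_of_sup_lt_one_and_multiplier_general (φ : ℂ → ℂ)
    (hd : DifferentiableOn ℂ φ unitDisc)
    (hsup : ∃ r : ℝ, r < 1 ∧ ∀ z ∈ unitDisc, ‖φ z‖ ≤ r)
    (hmult : ∀ f : ℂ → ℂ, MemDirichlet f → MemDirichlet fun z => φ z * f z) :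
    ∀ u : ℂ → ℂ, MemDirichlet u → WCOBounded u φ := by
  obtain ⟨r, hr, hφr⟩ := hsup
  intro u hu
  set G : ℂ → ℝ := fun z ↦ 2 * (‖deriv u z‖ ^ 2 * (2 + 9 / (1 - r) ^ 2) +
    ‖u z * deriv φ z‖ ^ 2 * (9 / (2 * (1 - r) ^ 2)))
  have hG : IntegrableOn G unitDisc := ((hu.2.mul_const _).add
    ((integrableOn_sq_norm_mul_deriv hu (hmult u hu) hd fun z hz ↦
      (hφr z hz).trans hr.le).mul_const _)).const_mul 2
  refine ⟨‖u 0‖ ^ 2 * (2 + 9 / (1 - r) ^ 2) + 1 / π * ∫ z in unitDisc, G z, by positivity,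
    fun f hf ↦ ?_⟩
  have hderiv (z : ℂ) (hz : z ∈ unitDisc) :=
    hf.sq_norm_deriv_mul_comp_le_dirNormSq hu.1 hd hr hφr hz
  have h0 : ‖u 0 * f (φ 0)‖ ^ 2 ≤ ‖u 0‖ ^ 2 * (2 + 9 / (1 - r) ^ 2) * dirNormSq f := by
    rw [norm_mul, mul_pow, mul_assoc]
    gcongr
    exact hf.sq_norm_le hr (hφr 0 (mem_ball_self one_pos))
  have hφD : MapsTo φ unitDisc unitDisc := fun z hz ↦
    mem_ball_zero_iff.2 ((hφr z hz).trans_lt hr)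
  refine ⟨.of_sq_norm_deriv_le (hu.1.mul (hf.1.comp hd hφD)) (hG.const_mul _) hderiv, ?_⟩
  refine (dirNormSq_le_of_sq_norm_deriv_le h0 (hG.const_mul _) hderiv).trans_eq ?_
  rw [integral_const_mul]
  ring

/-- If `φ` is a holomorphic self-map of `𝔻` with `sup_{z∈𝔻}|φ(z)| < 1` which is
a multiplier of `𝒟`, then `W_{u,φ}` is bounded on `𝒟` for every `u ∈ 𝒟`. -/
theorem wco_bounded_of_sup_lt_one_and_multiplier (φ : ℂ → ℂ)
    (hd : DifferentiableOn ℂ φ unitDisc)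
    (hm : Set.MapsTo φ unitDisc unitDisc)
    (hsup : ∃ r : ℝ, r < 1 ∧ ∀ z ∈ unitDisc, ‖φ z‖ ≤ r)
    (hmult : ∀ f : ℂ → ℂ, MemDirichlet f → MemDirichlet fun z => φ z * f z) :
    ∀ u : ℂ → ℂ, MemDirichlet u → WCOBounded u φ :=
  wco_bounded_of_sup_lt_one_and_multiplier_general φ hd hsup hmult
end
end

section
/- If g is a multiplier of the Dirichlet space 𝒟 and g is bounded away from zero on 𝔻, i.e., inf_{z∈𝔻} |g(z)| > 0, then 1/g is also a multiplier of 𝒟. -/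
/-!
Off the zeros of `g`, `(f/g)' = (2 g f' - (g f)') / g²`. When `|g| ≥ δ > 0`, this bounds
`|(f/g)'|²` pointwise by a combination of `|f'|²` and `|(g f)'|²`, both of which are
integrable over `𝔻` since `f` and `g f` lie in `𝒟`.
-/

open Complex MeasureTheory Metric Set Filter

noncomputable section

/-- `u` is a multiplier of the Dirichlet space: `u` is holomorphic on `𝔻`
and `u·f ∈ 𝒟` for every `f ∈ 𝒟`. -/
def IsMultiplier (u : ℂ → ℂ) : Prop :=
  DifferentiableOn ℂ u unitDisc ∧
    ∀ f : ℂ → ℂ, MemDirichlet f → MemDirichlet fun z => u z * f z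

section

variable {𝕜 : Type*} [NontriviallyNormedField 𝕜]

theorem deriv_inv_mul_eq {f g : 𝕜 → 𝕜} {z : 𝕜} (hf : DifferentiableAt 𝕜 f z)
    (hg : DifferentiableAt 𝕜 g z) (hgz : g z ≠ 0) :
    deriv (fun w => (g w)⁻¹ * f w) z =
      2 * deriv f z / g z - deriv (fun w => g w * f w) z / g z ^ 2 := by
  rw [deriv_fun_mul (c := fun w => (g w)⁻¹) (hg.inv hgz) hf, deriv_fun_mul hg hf,
    deriv_fun_inv'' hg hgz]
  field_simp
  ring

theorem sq_norm_two_mul_div_sub_div_sq_le {a b c : 𝕜} {δ : ℝ} (hδ : 0 < δ) (hc : δ ≤ ‖c‖) :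
    ‖2 * a / c - b / c ^ 2‖ ^ 2 ≤ 8 / δ ^ 2 * ‖a‖ ^ 2 + 2 / δ ^ 4 * ‖b‖ ^ 2 := by
  have htri : ‖2 * a / c - b / c ^ 2‖ ≤ 2 * ‖a‖ / δ + ‖b‖ / δ ^ 2 := by
    refine (norm_sub_le _ _).trans ?_
    rw [norm_div, norm_div, norm_pow, two_mul, two_mul]
    gcongr
    exact norm_add_le a a
  calc ‖2 * a / c - b / c ^ 2‖ ^ 2 ≤ (2 * ‖a‖ / δ + ‖b‖ / δ ^ 2) ^ 2 := by gcongr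
    _ ≤ 2 * (2 * ‖a‖ / δ) ^ 2 + 2 * (‖b‖ / δ ^ 2) ^ 2 := by
      nlinarith [sq_nonneg (2 * ‖a‖ / δ - ‖b‖ / δ ^ 2)]
    _ = 8 / δ ^ 2 * ‖a‖ ^ 2 + 2 / δ ^ 4 * ‖b‖ ^ 2 := by ring

end

theorem ne_zero_of_le_norm {α E : Type*} [NormedAddCommGroup E] {g : α → E} {s : Set α}
    {δ : ℝ} (hδ : 0 < δ) (hbd : ∀ z ∈ s, δ ≤ ‖g z‖) {z : α} (hz : z ∈ s) : g z ≠ 0 :=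
  norm_pos_iff.mp (hδ.trans_le (hbd z hz))

theorem MemDirichlet.inv_mul {f g : ℂ → ℂ} {δ : ℝ} (hf : MemDirichlet f)
    (hgf : MemDirichlet fun z => g z * f z) (hg : DifferentiableOn ℂ g unitDisc)
    (hδ : 0 < δ) (hbd : ∀ z ∈ unitDisc, δ ≤ ‖g z‖) :
    MemDirichlet fun z => (g z)⁻¹ * f z := by
  have hginv := hg.inv fun z hz => ne_zero_of_le_norm hδ hbd hz
  refine ⟨hginv.mul hf.1, ?_⟩
  have hdom := (hf.2.const_mul (8 / δ ^ 2)).add (hgf.2.const_mul (2 / δ ^ 4))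
  refine hdom.mono' ((measurable_deriv _).norm.pow_const 2).aestronglyMeasurable ?_
  filter_upwards [ae_restrict_mem isOpen_ball.measurableSet] with z hz
  have hnhds : unitDisc ∈ nhds z := isOpen_ball.mem_nhds hz
  rw [Real.norm_of_nonneg (by positivity), deriv_inv_mul_eq (hf.1.differentiableAt hnhds)
    (hg.differentiableAt hnhds) (ne_zero_of_le_norm hδ hbd hz)]
  exact sq_norm_two_mul_div_sub_div_sq_le hδ (hbd z hz)

/-- If `g` is a multiplier of the Dirichlet space which is bounded away from
zero on `𝔻`, then `1/g` is also a multiplier of `𝒟`. -/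
theorem inv_multiplier_of_bddBelow (g : ℂ → ℂ) (hg : IsMultiplier g)
    (hlow : ∃ δ : ℝ, 0 < δ ∧ ∀ z ∈ unitDisc, δ ≤ ‖g z‖) :
    IsMultiplier fun z => (g z)⁻¹ := by
  obtain ⟨δ, hδ, hbd⟩ := hlow
  exact ⟨hg.1.inv fun z hz => ne_zero_of_le_norm hδ hbd hz,
    fun f hf => hf.inv_mul (hg.2 f hf) hg.1 hδ hbd⟩
end
end

section
/- Let φ be a parabolic automorphism of the unit disc 𝔻 and let φ_n denote its n-th iterate. Then there exists a constant C > 0 (depending on φ) such that sup_{z∈𝔻} |φ_n′(z)| ≤ C n² for all n ≥ 1. -/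
open Complex MeasureTheory Metric Set Filter

noncomputable section

/-- `φ` is a parabolic automorphism of `𝔻`:
`φ(z) = e^{iθ}(p − z)/(1 − \bar{p} z)` with `p ∈ 𝔻`, `−π < θ ≤ π` and
`|p| = cos(θ/2)`. -/
def IsParabolicAutomorphism (φ : ℂ → ℂ) : Prop :=
  ∃ (θ : ℝ) (p : ℂ), -Real.pi < θ ∧ θ ≤ Real.pi ∧ ‖p‖ < 1 ∧
    ‖p‖ = Real.cos (θ / 2) ∧
    ∀ z ∈ unitDisc,
      φ z = Complex.exp (θ * Complex.I) * (p - z) / (1 - (starRingEnd ℂ) p * z)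

/-!
With `u = e^{iθ}`, the condition `|p| = cos(θ/2)` reads `4u|p|² = (1 + u)²`: the matrix of
`φ(z) = u(p - z)/(1 - p̄z)` is a scalar multiple of a unipotent matrix. Hence `φ_n` is the Möbius
map of a matrix `[[A, B], [C, D]]` whose entries are affine in `n` and whose determinant is
`(1 - u)²`, so `φ_n′(z) = (1 - u)²/(Cz + D)²`. As `|D|² - |C|² = |1 - u|²` while `|C|, |D| = O(n)`,
on the disc `|Cz + D| ≥ |D| - |C| = |1 - u|²/(|D| + |C|) ≳ 1/n`, whence `|φ_n′| = O(n²)`.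
-/

open ComplexConjugate

theorem hasDerivAt_mobius {a b c d z : ℂ} (hz : c * z + d ≠ 0) :
    HasDerivAt (fun w => (a * w + b) / (c * w + d)) ((a * d - b * c) / (c * z + d) ^ 2) z := by
  have hnum : HasDerivAt (fun w => a * w + b) a z := by
    simpa using ((hasDerivAt_id z).const_mul a).add_const b
  have hden : HasDerivAt (fun w => c * w + d) c z := by
    simpa using ((hasDerivAt_id z).const_mul c).add_const d
  exact (hnum.div hden hz).congr_deriv (by ring)

theorem normSq_one_sub_conj_mul_sub_normSq_sub (p w : ℂ) :
    normSq (1 - conj p * w) - normSq (p - w) = (1 - normSq p) * (1 - normSq w) := by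
  simp only [normSq_apply, sub_re, sub_im, mul_re, mul_im, one_re, one_im, conj_re, conj_im]
  ring

theorem norm_sub_lt_norm_one_sub_conj_mul {p w : ℂ} (hp : ‖p‖ < 1) (hw : ‖w‖ < 1) :
    ‖p - w‖ < ‖1 - conj p * w‖ := by
  have hp' : normSq p < 1 := by rw [normSq_eq_norm_sq]; nlinarith [norm_nonneg p]
  have hw' : normSq w < 1 := by rw [normSq_eq_norm_sq]; nlinarith [norm_nonneg w]
  have key := normSq_one_sub_conj_mul_sub_normSq_sub p w
  rw [normSq_eq_norm_sq, normSq_eq_norm_sq] at key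
  have : 0 < (1 - normSq p) * (1 - normSq w) := mul_pos (by linarith) (by linarith)
  exact lt_of_pow_lt_pow_left₀ 2 (norm_nonneg _) (by linarith)

theorem mapsTo_unitDisc_mobius {u p : ℂ} (hu : ‖u‖ = 1) (hp : ‖p‖ < 1) :
    MapsTo (fun z => u * (p - z) / (1 - conj p * z)) unitDisc unitDisc := by
  intro w hw
  rw [unitDisc, mem_ball_zero_iff] at hw ⊢
  have hlt := norm_sub_lt_norm_one_sub_conj_mul hp hw
  rw [norm_div, norm_mul, hu, one_mul, div_lt_one ((norm_nonneg _).trans_lt hlt)]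
  exact hlt

theorem four_mul_exp_mul_mul_conj_of_norm_eq_cos {θ : ℝ} {p : ℂ} (h : ‖p‖ = Real.cos (θ / 2)) :
    4 * exp (θ * I) * (p * conj p) = (1 + exp (θ * I)) ^ 2 := by
  set e := exp (θ / 2 * I)
  have hsq : exp (θ * I) = e ^ 2 := by
    rw [← exp_nat_mul]; congr 1; push_cast; ring
  have hcos : 2 * cos (θ / 2 : ℝ) = e + exp (-(θ / 2) * I) := by
    push_cast; exact two_cos _
  have hinv : e * exp (-(θ / 2) * I) = 1 := by
    rw [← exp_add]; ring_nf; exact exp_zero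
  have hsum : 1 + exp (θ * I) = e * (2 * cos (θ / 2 : ℝ)) := by
    rw [hsq]; linear_combination -e * hcos - hinv
  rw [mul_conj', h, ofReal_cos, hsum, hsq]
  ring

theorem norm_sub_norm_le_norm_mul_add {R : Type*} [NonUnitalSeminormedRing R] {c d w : R}
    (hw : ‖w‖ ≤ 1) : ‖d‖ - ‖c‖ ≤ ‖c * w + d‖ := by
  have hcw : ‖c * w‖ ≤ ‖c‖ :=
    (norm_mul_le c w).trans (mul_le_of_le_one_right (norm_nonneg c) hw)
  have := norm_sub_norm_le d (-(c * w))
  rw [norm_neg, sub_neg_eq_add, add_comm] at this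
  linarith

theorem ne_one_of_four_mul_mul_conj_eq {u p : ℂ} (hp : ‖p‖ < 1)
    (hpar : 4 * u * (p * conj p) = (1 + u) ^ 2) : u ≠ 1 := by
  rintro rfl
  have : ‖p‖ ^ 2 = 1 := by
    rw [mul_conj'] at hpar
    exact_mod_cast (by linear_combination hpar / 4 : (‖p‖ : ℂ) ^ 2 = 1)
  nlinarith [norm_nonneg p]

section ParabolicIterate

variable (u p : ℂ) (n : ℕ)

/- The matrix `[[-u, u p], [-p̄, 1]]` of `z ↦ u (p - z) / (1 - p̄ z)` equals `((1 - u) / 2) (1 + N)`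
with `N` nilpotent exactly when `4 u |p|² = (1 + u)²`; the `n`-th iterate is then the Möbius map
of `(1 - u) (1 + n N)`, whose entries are the following. -/

def iterCoeffA : ℂ := (1 - u) - n * (1 + u)

def iterCoeffB : ℂ := n * (2 * u * p)

def iterCoeffC : ℂ := n * (-2 * conj p)

def iterCoeffD : ℂ := (1 - u) + n * (1 + u)

def iterDenom (w : ℂ) : ℂ := iterCoeffC p n * w + iterCoeffD u n

def parabolicIter (w : ℂ) : ℂ := (iterCoeffA u n * w + iterCoeffB u p n) / iterDenom u p n w

variable {u p}

theorem parabolicIter_zero (hu1 : u ≠ 1) (w : ℂ) : parabolicIter u p 0 w = w := by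
  have : (1 : ℂ) - u ≠ 0 := sub_ne_zero.mpr hu1.symm
  simp [parabolicIter, iterDenom, iterCoeffA, iterCoeffB, iterCoeffC, iterCoeffD, this]

theorem norm_iterCoeffD_add_norm_iterCoeffC_le (hu : ‖u‖ = 1) (hp : ‖p‖ ≤ 1) (hn : 1 ≤ n) :
    ‖iterCoeffD u n‖ + ‖iterCoeffC p n‖ ≤ 6 * n := by
  have h1 : ‖1 - u‖ ≤ 2 := (norm_sub_le _ _).trans (by rw [norm_one, hu]; norm_num)
  have h2 : ‖1 + u‖ ≤ 2 := (norm_add_le _ _).trans (by rw [norm_one, hu]; norm_num)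
  have hD : ‖iterCoeffD u n‖ ≤ ‖1 - u‖ + n * ‖1 + u‖ := by
    simpa [iterCoeffD, norm_mul] using norm_add_le (1 - u) (n * (1 + u))
  have hC : ‖iterCoeffC p n‖ = n * (2 * ‖p‖) := by simp [iterCoeffC]
  have hn' : (1 : ℝ) ≤ n := by exact_mod_cast hn
  nlinarith

variable (hpar : 4 * u * (p * conj p) = (1 + u) ^ 2)
include hpar

theorem iterCoeff_det :
    iterCoeffA u n * iterCoeffD u n - iterCoeffB u p n * iterCoeffC p n = (1 - u) ^ 2 := by
  simp only [iterCoeffA, iterCoeffB, iterCoeffC, iterCoeffD]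
  linear_combination (n : ℂ) ^ 2 * hpar

theorem sq_norm_iterCoeffD_sub_sq_norm_iterCoeffC (hu : ‖u‖ = 1) :
    ‖iterCoeffD u n‖ ^ 2 - ‖iterCoeffC p n‖ ^ 2 = ‖1 - u‖ ^ 2 := by
  have huu : u * conj u = 1 := by rw [mul_conj', hu]; norm_num
  have : ((‖iterCoeffD u n‖ ^ 2 - ‖iterCoeffC p n‖ ^ 2 : ℝ) : ℂ) = ((‖1 - u‖ ^ 2 : ℝ) : ℂ) := by
    push_cast
    simp only [← mul_conj', iterCoeffC, iterCoeffD, map_add, map_sub, map_mul, map_one,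
      map_natCast, map_neg, map_ofNat, conj_conj]
    linear_combination (-2 * (n : ℂ) - (n : ℂ) ^ 2 * (1 + u) + 4 * (n : ℂ) ^ 2 * p * conj p) * huu
      - (n : ℂ) ^ 2 * conj u * hpar
  exact_mod_cast this

theorem iterCoeff_succ_num (w : ℂ) :
    u * (p * iterDenom u p n w - (iterCoeffA u n * w + iterCoeffB u p n))
      = (1 - u) / 2 * (iterCoeffA u (n + 1) * w + iterCoeffB u p (n + 1)) := by
  simp only [iterDenom, iterCoeffA, iterCoeffB, iterCoeffC, iterCoeffD]
  push_cast
  linear_combination -((n : ℂ) * w) / 2 * hpar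

theorem iterCoeff_succ_den (w : ℂ) :
    iterDenom u p n w - conj p * (iterCoeffA u n * w + iterCoeffB u p n)
      = (1 - u) / 2 * iterDenom u p (n + 1) w := by
  simp only [iterDenom, iterCoeffA, iterCoeffB, iterCoeffC, iterCoeffD]
  push_cast
  linear_combination -(n : ℂ) / 2 * hpar

theorem mobius_parabolicIter_eq_succ (hu1 : u ≠ 1) {w : ℂ}
    (hw : iterDenom u p n w ≠ 0) :
    u * (p - parabolicIter u p n w) / (1 - conj p * parabolicIter u p n w)
      = parabolicIter u p (n + 1) w := by
  have h2 : (1 - u) / 2 ≠ 0 := div_ne_zero (sub_ne_zero.mpr hu1.symm) two_ne_zero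
  have hnum := iterCoeff_succ_num n hpar w
  have hden := iterCoeff_succ_den n hpar w
  set N := iterCoeffA u n * w + iterCoeffB u p n
  set D := iterDenom u p n w
  have e1 : p - N / D = (p * D - N) / D := by field_simp
  have e2 : 1 - conj p * (N / D) = (D - conj p * N) / D := by field_simp
  rw [parabolicIter, parabolicIter, e1, e2, mul_div_assoc', div_div_div_cancel_right₀ hw, hnum,
    hden, mul_div_mul_left _ _ h2]

theorem sq_norm_one_sub_le_norm_iterDenom_mul (hu : ‖u‖ = 1) {w : ℂ} (hw : ‖w‖ ≤ 1) :
    ‖1 - u‖ ^ 2 ≤ ‖iterDenom u p n w‖ * (‖iterCoeffD u n‖ + ‖iterCoeffC p n‖) := by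
  have : ‖iterCoeffD u n‖ - ‖iterCoeffC p n‖ ≤ ‖iterDenom u p n w‖ :=
    norm_sub_norm_le_norm_mul_add hw
  rw [← sq_norm_iterCoeffD_sub_sq_norm_iterCoeffC n hpar hu]
  nlinarith [norm_nonneg (iterCoeffD u n), norm_nonneg (iterCoeffC p n)]

theorem iterDenom_ne_zero (hu : ‖u‖ = 1) (hu1 : u ≠ 1) {w : ℂ} (hw : ‖w‖ ≤ 1) :
    iterDenom u p n w ≠ 0 := by
  intro h
  have := sq_norm_one_sub_le_norm_iterDenom_mul n hpar hu hw
  rw [h, norm_zero, zero_mul] at this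
  exact sub_ne_zero.mpr hu1.symm (by simpa using this)

theorem hasDerivAt_parabolicIter (hu : ‖u‖ = 1) (hu1 : u ≠ 1) {z : ℂ} (hz : ‖z‖ ≤ 1) :
    HasDerivAt (parabolicIter u p n)
      ((1 - u) ^ 2 / (iterDenom u p n z) ^ 2) z := by
  rw [← iterCoeff_det n hpar]
  exact hasDerivAt_mobius (iterDenom_ne_zero n hpar hu hu1 hz)

theorem norm_deriv_parabolicIter_le (hu : ‖u‖ = 1) (hu1 : u ≠ 1) (hp : ‖p‖ ≤ 1) (hn : 1 ≤ n)
    {z : ℂ} (hz : ‖z‖ ≤ 1) :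
    ‖deriv (parabolicIter u p n) z‖ ≤ 36 / ‖1 - u‖ ^ 2 * n ^ 2 := by
  rw [(hasDerivAt_parabolicIter n hpar hu hu1 hz).deriv, norm_div, norm_pow, norm_pow]
  have hs : 0 < ‖1 - u‖ := norm_pos_iff.mpr (sub_ne_zero.mpr hu1.symm)
  have hden : 0 < ‖iterDenom u p n z‖ :=
    norm_pos_iff.mpr (iterDenom_ne_zero n hpar hu hu1 hz)
  have hlow : ‖1 - u‖ ^ 2 ≤ ‖iterDenom u p n z‖ * (6 * n) :=
    (sq_norm_one_sub_le_norm_iterDenom_mul n hpar hu hz).trans <|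
      mul_le_mul_of_nonneg_left (norm_iterCoeffD_add_norm_iterCoeffC_le n hu hp hn) hden.le
  have hsq := pow_le_pow_left₀ (by positivity) hlow 2
  rw [div_le_iff₀ (by positivity), div_mul_eq_mul_div, div_mul_eq_mul_div,
    le_div_iff₀ (by positivity)]
  linarith

theorem iterate_eqOn_parabolicIter {φ : ℂ → ℂ} (hu : ‖u‖ = 1) (hu1 : u ≠ 1) (hp : ‖p‖ < 1)
    (hφ : EqOn φ (fun z => u * (p - z) / (1 - conj p * z)) unitDisc) (n : ℕ) :
    EqOn φ^[n] (parabolicIter u p n) unitDisc := by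
  have hmaps : MapsTo φ unitDisc unitDisc := (mapsTo_unitDisc_mobius hu hp).congr hφ.symm
  induction n with
  | zero => intro w _; exact (parabolicIter_zero hu1 w).symm
  | succ n ih =>
    intro w hw
    have hw' : ‖w‖ ≤ 1 := (mem_ball_zero_iff.mp hw).le
    rw [Function.iterate_succ_apply', ih hw, hφ (ih hw ▸ hmaps.iterate n hw)]
    exact mobius_parabolicIter_eq_succ n hpar hu1 (iterDenom_ne_zero n hpar hu hu1 hw')

end ParabolicIterate

/-- If `φ` is a parabolic automorphism of `𝔻`, then there is a constant `C > 0`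
(depending on `φ`) such that `sup_{z∈𝔻} |φ_n′(z)| ≤ C n²` for all `n ≥ 1`,
where `φ_n` is the `n`-th iterate of `φ`. -/
theorem parabolic_iterate_deriv_bound (φ : ℂ → ℂ)
    (hφ : IsParabolicAutomorphism φ) :
    ∃ C : ℝ, 0 < C ∧ ∀ n : ℕ, 1 ≤ n → ∀ z ∈ unitDisc,
      ‖deriv (φ^[n]) z‖ ≤ C * (n : ℝ) ^ 2 := by
  obtain ⟨θ, p, -, -, hp, hpcos, hφeq⟩ := hφ
  set u := exp (θ * I)
  have hu : ‖u‖ = 1 := norm_exp_ofReal_mul_I θ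
  have hpar := four_mul_exp_mul_mul_conj_of_norm_eq_cos hpcos
  have hu1 := ne_one_of_four_mul_mul_conj_eq hp hpar
  have hs : 0 < ‖1 - u‖ := norm_pos_iff.mpr (sub_ne_zero.mpr hu1.symm)
  refine ⟨36 / ‖1 - u‖ ^ 2, by positivity, fun n hn z hz => ?_⟩
  have hiter := iterate_eqOn_parabolicIter hpar hu hu1 hp hφeq n
  rw [(hiter.eventuallyEq_of_mem (isOpen_ball.mem_nhds hz)).deriv_eq]
  exact norm_deriv_parabolicIter_le n hpar hu hu1 hp.le hn (mem_ball_zero_iff.mp hz).le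
end
end
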